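/- arXiv:1511.04291 — 5 statements merged into one kernel-verified Lean document; each statement's English description precedes it below -/
import Mathlib

section
/- Let P and Q be discrete p-toral groups (groups containing a normal subgroup isomorphic to a finite direct power of the Prüfer p-group ℤ/p^∞, of p-power index) with P a proper subgroup of Q. Then P is a proper subgroup of its normalizer N_Q(P). -/
/-!
A discrete `p`-toral group `Q` is an extension of a finite `p`-group by a `p`-torus `T`, hence
a `p`-group. A `p`-subgroup `P` acting by left multiplication on a finite set of cosets of
itself whose size is divisible by `p` fixes, besides `P`, some coset `kP`; then `k⁻¹ P k ≤ P`,
and since `k` has finite order, `k` normalizes `P`. Such a set of cosets is the image in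
`Q ⧸ P` of a `p`-subgroup `K` normalized by `P` with `K ⊄ P` and `[K : K ∩ P]` finite: take
`K = Q` if `T ≤ P`, and otherwise the normal closure of some `t ∈ T \ P`, which is finite
because `t` has at most `[Q : T]` conjugates, all lying in the abelian torsion group `T`.
-/

open scoped Pointwise

/-- The Prüfer `p`-group, realized as the `p`-power torsion of `ℚ/ℤ`. -/
def Prufer (p : ℕ) : AddSubgroup (AddCircle (1 : ℚ)) where
  carrier := {x | ∃ n : ℕ, (p ^ n : ℕ) • x = 0}
  zero_mem' := ⟨0, smul_zero _⟩
  add_mem' := by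
    rintro a b ⟨m, hm⟩ ⟨n, hn⟩
    refine ⟨m + n, ?_⟩
    have h1 : (p ^ (m + n) : ℕ) • a = 0 := by
      rw [show p ^ (m + n) = p ^ n * p ^ m by ring, mul_smul, hm, smul_zero]
    have h2 : (p ^ (m + n) : ℕ) • b = 0 := by
      rw [show p ^ (m + n) = p ^ m * p ^ n by ring, mul_smul, hn, smul_zero]
    rw [smul_add, h1, h2, add_zero]
  neg_mem' := by
    rintro a ⟨m, hm⟩
    exact ⟨m, by rw [smul_neg, hm, neg_zero]⟩

/-- `T` is a discrete `p`-torus: isomorphic to a finite direct power of the Prüfer `p`-group. -/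
def IsPTorus (p : ℕ) (T : Type*) [Group T] : Prop :=
  ∃ r : ℕ, Nonempty (T ≃* Multiplicative (Fin r → Prufer p))

/-- `G` is a discrete `p`-toral group: it has a normal discrete `p`-torus of `p`-power index. -/
def IsDiscretePToral (p : ℕ) (G : Type*) [Group G] : Prop :=
  ∃ T : Subgroup G, T.Normal ∧ IsPTorus p ↥T ∧ ∃ k : ℕ, Nat.card (G ⧸ T) = p ^ k

/-- `G` is a virtually discrete `p`-toral group: it has a normal discrete `p`-torus of
finite index. -/
def IsVirtuallyDiscretePToral (p : ℕ) (G : Type*) [Group G] : Prop :=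
  ∃ T : Subgroup G, T.Normal ∧ IsPTorus p ↥T ∧ Finite (G ⧸ T)

/-- A subgroup is discrete `p`-toral. -/
def IsDiscretePToralSubgroup (p : ℕ) {G : Type*} [Group G] (H : Subgroup G) : Prop :=
  IsDiscretePToral p ↥H

/-- A Sylow `p`-subgroup of a virtually discrete `p`-toral group:
a maximal discrete `p`-toral subgroup. -/
def IsMaxDiscretePToralSubgroup (p : ℕ) {G : Type*} [Group G] (S : Subgroup G) : Prop :=
  IsDiscretePToralSubgroup p S ∧
    ∀ P : Subgroup G, IsDiscretePToralSubgroup p P → S ≤ P → P = S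

/-- The identity component `Γ₀`: the (unique maximal) discrete `p`-torus subgroup,
realized as the subgroup generated by all discrete `p`-torus subgroups. -/
def identityComponent (p : ℕ) (G : Type*) [Group G] : Subgroup G :=
  ⨆ T ∈ {T : Subgroup G | IsPTorus p ↥T}, T

/-- `Ω_n(D)`: the subgroup of elements of order dividing `p ^ n`. -/
def Omega (p n : ℕ) (D : Type*) [CommGroup D] : Subgroup D where
  carrier := {x | x ^ p ^ n = 1}
  one_mem' := one_pow _
  mul_mem' := by
    intro a b ha hb
    simp only [Set.mem_setOf_eq] at *
    rw [mul_pow, ha, hb, one_mul]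
  inv_mem' := by
    intro a ha
    simp only [Set.mem_setOf_eq] at *
    rw [inv_pow, ha, inv_one]

/-- `D₀` is the maximal divisible subgroup of `D`. -/
def IsMaxDivisible {D : Type*} [CommGroup D] (D₀ : Subgroup D) : Prop :=
  (∀ x ∈ D₀, ∀ n : ℕ, n ≠ 0 → ∃ y ∈ D₀, y ^ n = x) ∧
    ∀ E : Subgroup D, (∀ x ∈ E, ∀ n : ℕ, n ≠ 0 → ∃ y ∈ E, y ^ n = x) → E ≤ D₀

/-- The subgroup of points of `D` fixed by every element of `A ⊆ G`. -/
def fixedSub (G : Type*) [Group G] (D : Type*) [Group D] [MulDistribMulAction G D]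
    (A : Set G) : Subgroup D where
  carrier := {x | ∀ a ∈ A, a • x = x}
  one_mem' := fun a _ => smul_one a
  mul_mem' := by
    intro x y hx hy a ha
    rw [smul_mul', hx a ha, hy a ha]
  inv_mem' := by
    intro x hx a ha
    rw [smul_inv', hx a ha]

/-- The commutator `[W, A]` of a subgroup `W ≤ D` with a set `A ⊆ G` acting on `D`. -/
def actComm (G : Type*) [Group G] {D : Type*} [Group D] [MulDistribMulAction G D]
    (A : Set G) (W : Subgroup D) : Subgroup D :=
  Subgroup.closure {x | ∃ w ∈ W, ∃ a ∈ A, x = w⁻¹ * a • w}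

/-- `R` is a set of representatives for the (left) cosets of `H` inside `K`. -/
def IsRelTransversal {G : Type*} [Group G] (H K : Subgroup G) (R : Finset G) : Prop :=
  (↑R : Set G) ⊆ (K : Set G) ∧ ∀ g ∈ K, ∃! r, r ∈ R ∧ r⁻¹ * g ∈ H

/-- `A` is an offender of `G` on `D` (relative to the identity component `D₀`). -/
def IsOffender (p : ℕ) {G D : Type*} [Group G] [CommGroup D] [MulDistribMulAction G D]
    (D₀ : Subgroup D) (A : Subgroup G) : Prop :=
  IsPGroup p ↥A ∧ (∀ x ∈ A, ∀ y ∈ A, x * y = y * x) ∧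
    D₀ ≤ fixedSub G D (A : Set G) ∧
    (fixedSub G D (A : Set G)).index ≠ 0 ∧
    (fixedSub G D (A : Set G)).index ≤ Nat.card A

/-- `A` is a best offender of `G` on `D` (relative to the identity component `D₀`). -/
def IsBestOffender (p : ℕ) {G D : Type*} [Group G] [CommGroup D] [MulDistribMulAction G D]
    (D₀ : Subgroup D) (A : Subgroup G) : Prop :=
  IsPGroup p ↥A ∧ (∀ x ∈ A, ∀ y ∈ A, x * y = y * x) ∧
    D₀ ≤ fixedSub G D (A : Set G) ∧
    ∀ B : Subgroup G, B ≤ A →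
      Nat.card B * D₀.relIndex (fixedSub G D (B : Set G)) ≤
        Nat.card A * D₀.relIndex (fixedSub G D (A : Set G))

/-- `A` is an over-offender of `G` on `D`. -/
def IsOverOffender (p : ℕ) {G D : Type*} [Group G] [CommGroup D] [MulDistribMulAction G D]
    (D₀ : Subgroup D) (A : Subgroup G) : Prop :=
  IsBestOffender p D₀ A ∧
    D₀.index < Nat.card A * D₀.relIndex (fixedSub G D (A : Set G))

/-- `A` is a best offender of `G` on the invariant subgroup `W ≤ D` with identity
component `W₀`. -/
def IsBestOffenderOn (p : ℕ) {G D : Type*} [Group G] [CommGroup D] [MulDistribMulAction G D]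
    (W₀ W : Subgroup D) (A : Subgroup G) : Prop :=
  IsPGroup p ↥A ∧ (∀ x ∈ A, ∀ y ∈ A, x * y = y * x) ∧
    W₀ ≤ W ⊓ fixedSub G D (A : Set G) ∧
    ∀ B : Subgroup G, B ≤ A →
      Nat.card B * W₀.relIndex (W ⊓ fixedSub G D (B : Set G)) ≤
        Nat.card A * W₀.relIndex (W ⊓ fixedSub G D (A : Set G))

/-- `A` is an over-offender of `G` on the invariant subgroup `W ≤ D` with identity
component `W₀`. -/
def IsOverOffenderOn (p : ℕ) {G D : Type*} [Group G] [CommGroup D] [MulDistribMulAction G D]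
    (W₀ W : Subgroup D) (A : Subgroup G) : Prop :=
  IsBestOffenderOn p W₀ W A ∧
    W₀.relIndex W < Nat.card A * W₀.relIndex (W ⊓ fixedSub G D (A : Set G))

open Filter MulAction

namespace Subgroup

variable {G : Type*} [Group G]

theorem mem_normalizer_of_isOfFinOrder {H : Subgroup G} {g : G} (hg : IsOfFinOrder g)
    (hgH : ∀ x ∈ H, g⁻¹ * x * g ∈ H) : g ∈ normalizer (H : Set G) := by
  have hpow : ∀ n : ℕ, ∀ x ∈ H, (g ^ n)⁻¹ * x * g ^ n ∈ H := by
    intro n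
    induction n with
    | zero => simp
    | succ n ih =>
      intro x hx
      simpa [pow_succ, mul_assoc] using hgH _ (ih x hx)
  obtain ⟨n, hn, hgn⟩ := hg.exists_pow_eq_one
  have hinv : g ^ (n - 1) = g⁻¹ := by
    rw [eq_inv_iff_mul_eq_one, ← pow_succ, Nat.sub_add_cancel hn, hgn]
  refine mem_normalizer_iff''.mpr fun x => ⟨hgH x, fun hx => ?_⟩
  simpa [hinv, mul_assoc] using hpow (n - 1) _ hx

open scoped IsMulCommutative in
theorem finite_normalClosure_singleton {A : Subgroup G} [A.Normal] [A.FiniteIndex]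
    [IsMulCommutative A] (hA : IsMulTorsion A) {a : G} (ha : a ∈ A) :
    Finite (normalClosure ({a} : Set G)) := by
  have hle : normalClosure ({a} : Set G) ≤ A := normalClosure_le_normal (by simpa)
  have hconj : (conjugatesOf a).Finite := by
    -- `A` centralizes `a`, so `g * a * g⁻¹` only depends on the coset `g • A`.
    let conj : G ⧸ A → G := Quotient.lift (fun g : G => g * a * g⁻¹) ?_
    · refine (Set.finite_range conj).subset fun b hb => ?_
      obtain ⟨c, rfl⟩ := isConj_iff.mp hb
      exact ⟨(c : G ⧸ A), rfl⟩
    · intro g h hgh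
      obtain ⟨x, hx, rfl⟩ : ∃ x ∈ A, h = g * x :=
        ⟨g⁻¹ * h, QuotientGroup.leftRel_apply.mp hgh, by group⟩
      rw [mul_assoc g x a, setLike_mul_comm hx ha]
      group
  have : Finite (Group.conjugatesOfSet ({a} : Set G)) := by
    simpa [Group.conjugatesOfSet] using hconj.to_subtype
  have : IsMulCommutative (normalClosure ({a} : Set G)) :=
    IsMulCommutative.of_comm fun x y => Subtype.ext (setLike_mul_comm (hle x.2) (hle y.2))
  have : Group.FG (normalClosure ({a} : Set G)) := Group.closure_finite_fg _
  refine CommGroup.finite_of_fg_isMulTorsion _ fun x => ?_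
  have hxA : IsOfFinOrder ((⟨x, hle x.2⟩ : A) : G) := Submonoid.isOfFinOrder_coe.mpr (hA _)
  exact Submonoid.isOfFinOrder_coe.mp hxA

theorem smul_coe_eq_coe_mul (H K : Subgroup G) (k : K) (g : G) :
    k • (g : G ⧸ H) = ((k * g : G) : G ⧸ H) :=
  rfl

theorem stabilizer_coe_one_eq_subgroupOf (H K : Subgroup G) :
    stabilizer K ((1 : G) : G ⧸ H) = H.subgroupOf K := by
  ext k
  rw [mem_stabilizer_iff, smul_coe_eq_coe_mul, QuotientGroup.eq]
  simp [mem_subgroupOf]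

def cosetOrbit (H K : Subgroup G) (hHK : H ≤ normalizer (K : Set G)) :
    SubMulAction H (G ⧸ H) where
  carrier := orbit K ((1 : G) : G ⧸ H)
  smul_mem' := by
    rintro h _ ⟨k, rfl⟩
    refine ⟨⟨(h : G) * k * (h : G)⁻¹, (mem_normalizer_iff.mp (hHK h.2) k).mp k.2⟩, ?_⟩
    dsimp only
    rw [smul_coe_eq_coe_mul, smul_coe_eq_coe_mul, smul_coe_eq_coe_mul, QuotientGroup.eq]
    convert h.2 using 1
    group

theorem card_cosetOrbit (H K : Subgroup G) (hHK : H ≤ normalizer (K : Set G)) :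
    Nat.card (cosetOrbit H K hHK) = H.relIndex K := by
  rw [relIndex, ← stabilizer_coe_one_eq_subgroupOf, index_stabilizer]
  exact Nat.card_coe_set_eq _

theorem lt_normalizer_of_isPGroup {p : ℕ} [Fact p.Prime] {H K : Subgroup G}
    (hH : IsPGroup p H) (hK : IsPGroup p K) (hHK : H ≤ normalizer (K : Set G))
    (hfin : H.relIndex K ≠ 0) (hKH : ¬K ≤ H) : H < normalizer (H : Set G) := by
  have : Finite (cosetOrbit H K hHK) :=
    Nat.finite_of_card_ne_zero (card_cosetOrbit H K hHK ▸ hfin)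
  have hdvd : p ∣ Nat.card (cosetOrbit H K hHK) := by
    have : (H.subgroupOf K).FiniteIndex := ⟨hfin⟩
    obtain ⟨n, hn⟩ := hK.index (H.subgroupOf K)
    have hn0 : n ≠ 0 := by
      rintro rfl
      exact hKH (relIndex_eq_one.mp hn)
    rw [card_cosetOrbit, relIndex, hn]
    exact dvd_pow_self p hn0
  let x₀ : cosetOrbit H K hHK := ⟨((1 : G) : G ⧸ H), mem_orbit_self _⟩
  have hx₀ : x₀ ∈ fixedPoints H (cosetOrbit H K hHK) := by
    intro h
    apply Subtype.ext
    show ((h * 1 : G) : G ⧸ H) = ((1 : G) : G ⧸ H)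
    rw [QuotientGroup.eq]
    simp
  obtain ⟨⟨_, k, rfl⟩, hk, hne⟩ :=
    hH.exists_fixed_point_of_prime_dvd_card_of_fixed_point _ hdvd hx₀
  have hkH : (k : G) ∉ H := by
    refine fun hkH => hne (Subtype.ext ?_)
    show ((1 : G) : G ⧸ H) = ((k * 1 : G) : G ⧸ H)
    rw [QuotientGroup.eq]
    simpa using hkH
  have hconj : ∀ x ∈ H, (k : G)⁻¹ * x * k ∈ H := by
    intro x hx
    have hfix : ((x⁻¹ * (k * 1) : G) : G ⧸ H) = ((k * 1 : G) : G ⧸ H) :=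
      congrArg Subtype.val (hk ⟨x⁻¹, inv_mem hx⟩)
    simpa [mul_assoc] using QuotientGroup.eq.mp hfix
  have hk : IsOfFinOrder (k : G) :=
    Submonoid.isOfFinOrder_coe.mpr (hK.isOfFinOrder (Fact.out : p.Prime).ne_zero k)
  exact SetLike.lt_iff_le_and_exists.mpr
    ⟨le_normalizer, (k : G), mem_normalizer_of_isOfFinOrder hk hconj, hkH⟩

end Subgroup

theorem IsPGroup.of_normal_of_quotient {G : Type*} [Group G] {p : ℕ} {N : Subgroup G} [N.Normal]
    (hN : IsPGroup p N) (hGN : IsPGroup p (G ⧸ N)) : IsPGroup p G := by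
  intro g
  obtain ⟨m, hm⟩ := hGN g
  have hgm : g ^ p ^ m ∈ N := by
    rw [← QuotientGroup.eq_one_iff, QuotientGroup.mk_pow, hm]
  obtain ⟨n, hn⟩ := hN ⟨_, hgm⟩
  exact ⟨m + n, by simpa [pow_add, pow_mul] using congrArg Subtype.val hn⟩

theorem Prufer.eventually_pow_smul_eq_zero (p : ℕ) (x : Prufer p) :
    ∀ᶠ n in atTop, (p ^ n : ℕ) • x = 0 := by
  obtain ⟨m, hm⟩ := x.2
  filter_upwards [eventually_ge_atTop m] with n hn
  apply Subtype.ext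
  rw [AddSubgroup.coe_nsmul, ← Nat.sub_add_cancel hn, pow_add, mul_smul, hm, smul_zero,
    ZeroMemClass.coe_zero]

namespace IsPTorus

variable {p : ℕ} {T : Type*} [Group T]

theorem isMulCommutative (hT : IsPTorus p T) : IsMulCommutative T := by
  obtain ⟨r, ⟨e⟩⟩ := hT
  exact IsMulCommutative.of_comm fun a b => e.injective (by rw [map_mul, map_mul, mul_comm])

theorem isPGroup (hT : IsPTorus p T) : IsPGroup p T := by
  obtain ⟨r, ⟨e⟩⟩ := hT
  intro a
  obtain ⟨n, hn⟩ := (eventually_all.mpr fun i =>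
    Prufer.eventually_pow_smul_eq_zero p (Multiplicative.toAdd (e a) i)).exists
  refine ⟨n, e.injective ?_⟩
  rw [map_pow, map_one]
  exact funext hn

end IsPTorus

theorem proper_lt_normalizer_general (p : ℕ) (hp : p.Prime) (Q : Type*) [Group Q]
    (hQ : IsDiscretePToral p Q) (P : Subgroup Q)
    (hPQ : P ≠ ⊤) :
    P < Subgroup.normalizer (P : Set Q) := by
  have : Fact p.Prime := ⟨hp⟩
  obtain ⟨T, hTn, hT, k, hk⟩ := hQ
  have hQp : IsPGroup p Q := hT.isPGroup.of_normal_of_quotient (IsPGroup.of_card hk)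
  have : T.FiniteIndex := ⟨by simp [Subgroup.index, hk, hp.ne_zero]⟩
  by_cases hTP : T ≤ P
  · have : P.FiniteIndex := Subgroup.finiteIndex_of_le hTP
    refine Subgroup.lt_normalizer_of_isPGroup (hQp.to_subgroup P)
      (hQp.to_subgroup (⊤ : Subgroup Q)) Subgroup.subset_normalizer_of_normal ?_
      (mt top_le_iff.mp hPQ)
    rw [Subgroup.relIndex_top_right]
    exact Subgroup.FiniteIndex.index_ne_zero
  · obtain ⟨t, htT, htP⟩ := SetLike.not_le_iff_exists.mp hTP
    have := hT.isMulCommutative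
    have := Subgroup.finite_normalClosure_singleton (hT.isPGroup.isOfFinOrder hp.ne_zero) htT
    exact Subgroup.lt_normalizer_of_isPGroup (hQp.to_subgroup P)
      (hQp.to_subgroup (Subgroup.normalClosure {t})) Subgroup.subset_normalizer_of_normal
      Subgroup.index_ne_zero_of_finite fun h => htP (h (Subgroup.subset_normalClosure rfl))

/-- If `P` is a proper subgroup of a discrete `p`-toral group `Q`
(so `P` is itself discrete `p`-toral), then `P` is a proper subgroup of its
normalizer `N_Q(P)`. -/
theorem proper_lt_normalizer (p : ℕ) (hp : p.Prime) (Q : Type*) [Group Q]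
    (hQ : IsDiscretePToral p Q) (P : Subgroup Q) (hP : IsDiscretePToralSubgroup p P)
    (hPQ : P ≠ ⊤) :
    P < Subgroup.normalizer (P : Set Q) :=
  proper_lt_normalizer_general p hp Q hQ P hPQ
end

section
/- If D is a normal abelian discrete p-toral subgroup of a virtually discrete p-toral group Γ, then the identity component Γ₀ of Γ centralizes D. -/
open scoped Pointwise

/-! A discrete `p`-torus is `p`-divisible and `p`-power torsion, so it has no nontrivial
homomorphism to a finite group `H`: the image of `t = s ^ p ^ |H|` is the `p ^ |H|`-th power of an
element of `p`-power order in `H`, hence trivial. Hence a discrete `p`-torus has no proper subgroup of finite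
index. If `d ∈ D` has order dividing `p ^ n`, all its conjugates in `Γ` lie in `Ω_n(D)`, which is
finite because `D` is abelian and discrete `p`-toral. So the centralizer of `d` has finite index
in `Γ`, and every discrete `p`-torus of `Γ` lies in it. -/

namespace Prufer

theorem finite_setOf_nsmul_eq_zero (p : ℕ) {N : ℕ} (hN : N ≠ 0) :
    {z : Prufer p | N • z = 0}.Finite :=
  ((AddCircle.finite_torsion (1 : ℚ) (Nat.pos_of_ne_zero hN)).preimage
    Subtype.val_injective.injOn).subset fun z hz => by
      simpa using congrArg Subtype.val hz

theorem exists_pow_nsmul_eq {p : ℕ} (hp : p ≠ 0) (k : ℕ) (z : Prufer p) :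
    ∃ y : Prufer p, p ^ k • y = z := by
  obtain ⟨m, hm⟩ := z.2
  have hpk : ((p ^ k : ℕ) : ℤ) ≠ 0 := by exact_mod_cast pow_ne_zero k hp
  set y := DivisibleBy.div (z : AddCircle (1 : ℚ)) ((p ^ k : ℕ) : ℤ)
  have hy : p ^ k • y = z := by
    rw [← natCast_zsmul]; exact DivisibleBy.div_cancel _ hpk
  refine ⟨⟨y, m + k, ?_⟩, Subtype.ext hy⟩
  rw [pow_add, mul_smul, hy, hm]

end Prufer

theorem pow_prime_pow_card_eq_one {G : Type*} [Group G] [Finite G] {p : ℕ} (hp : p.Prime)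
    {g : G} {n : ℕ} (hg : g ^ p ^ n = 1) : g ^ p ^ Nat.card G = 1 := by
  obtain ⟨b, -, hb⟩ := (Nat.dvd_prime_pow hp).1 (orderOf_dvd_of_pow_eq_one hg)
  have hb_le : p ^ b ≤ Nat.card G := hb ▸ Nat.le_of_dvd Nat.card_pos (orderOf_dvd_natCard g)
  have hb_lt : b < Nat.card G := (Nat.lt_pow_self hp.one_lt).trans_le hb_le
  exact orderOf_dvd_iff_pow_eq_one.1 (hb ▸ pow_dvd_pow p hb_lt.le)

namespace IsPTorus

variable {p : ℕ} {T : Type*} [Group T]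

theorem exists_pow_prime_pow_eq_one (hT : IsPTorus p T) (t : T) : ∃ n : ℕ, t ^ p ^ n = 1 := by
  obtain ⟨r, ⟨e⟩⟩ := hT
  choose n hn using fun i => (Multiplicative.toAdd (e t) i).2
  replace hn i : p ^ n i • Multiplicative.toAdd (e t) i = 0 := Subtype.ext (by simpa using hn i)
  refine ⟨Finset.univ.sup n, e.injective ?_⟩
  ext i : 2
  obtain ⟨c, hc⟩ := Nat.exists_eq_add_of_le (Finset.le_sup (f := n) (Finset.mem_univ i))
  simp [hc, pow_add, mul_comm, mul_smul, hn i]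

theorem exists_pow_eq (hp : p ≠ 0) (hT : IsPTorus p T) (k : ℕ) (t : T) :
    ∃ s : T, s ^ p ^ k = t := by
  obtain ⟨r, ⟨e⟩⟩ := hT
  choose y hy using fun i => Prufer.exists_pow_nsmul_eq hp k (Multiplicative.toAdd (e t) i)
  refine ⟨e.symm (Multiplicative.ofAdd y), e.injective ?_⟩
  rw [map_pow, MulEquiv.apply_symm_apply]
  exact congrArg Multiplicative.ofAdd (funext hy)

theorem finite_setOf_pow_eq_one (hT : IsPTorus p T) {N : ℕ} (hN : N ≠ 0) :
    {t : T | t ^ N = 1}.Finite := by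
  obtain ⟨r, ⟨e⟩⟩ := hT
  have hfin : {f : Fin r → Prufer p | N • f = 0}.Finite := by
    refine (Set.Finite.pi (t := fun _ => {z : Prufer p | N • z = 0})
      fun _ => Prufer.finite_setOf_nsmul_eq_zero p hN).subset fun f hf i _ => congrFun hf i
  refine hfin.preimage (f := fun t => Multiplicative.toAdd (e t)) ?_ |>.subset ?_
  · exact (Multiplicative.toAdd.injective.comp e.injective).injOn
  · intro t ht
    simp only [Set.mem_preimage, Set.mem_ofPred_eq] at ht ⊢
    rw [← toAdd_pow, ← map_pow, ht, map_one, toAdd_one]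

theorem map_eq_one_of_finite (hp : p.Prime) (hT : IsPTorus p T) {H : Type*} [Group H]
    [Finite H] (f : T →* H) (t : T) : f t = 1 := by
  obtain ⟨s, rfl⟩ := hT.exists_pow_eq hp.ne_zero (Nat.card H) t
  obtain ⟨n, hn⟩ := hT.exists_pow_prime_pow_eq_one s
  rw [map_pow]
  exact pow_prime_pow_card_eq_one hp (by rw [← map_pow, hn, map_one])

theorem eq_top_of_finiteIndex (hp : p.Prime) (hT : IsPTorus p T) (H : Subgroup T)
    [H.FiniteIndex] : H = ⊤ := by
  refine eq_top_iff.2 fun t _ => ?_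
  have hfix := congrArg (· ((1 : T) : T ⧸ H))
    (hT.map_eq_one_of_finite hp (MulAction.toPermHom T (T ⧸ H)) t)
  simpa [QuotientGroup.eq] using hfix

theorem le_of_finiteIndex (hp : p.Prime) {G : Type*} [Group G] {K : Subgroup G}
    (hK : IsPTorus p K) (H : Subgroup G) [H.FiniteIndex] : K ≤ H :=
  Subgroup.subgroupOf_eq_top.1 (hK.eq_top_of_finiteIndex hp _)

end IsPTorus

namespace IsDiscretePToral

variable {p : ℕ} {G : Type*}

theorem exists_pow_prime_pow_eq_one [Group G] (hp : p ≠ 0) (hG : IsDiscretePToral p G)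
    (g : G) : ∃ n : ℕ, g ^ p ^ n = 1 := by
  obtain ⟨T, hTn, hT, k, hk⟩ := hG
  have : Finite (G ⧸ T) := Nat.finite_of_card_ne_zero (hk ▸ pow_ne_zero k hp)
  have hgT : g ^ p ^ k ∈ T := by
    rw [← QuotientGroup.eq_one_iff, QuotientGroup.mk_pow, ← hk]
    exact pow_card_eq_one'
  obtain ⟨n, hn⟩ := hT.exists_pow_prime_pow_eq_one ⟨_, hgT⟩
  exact ⟨k + n, by rw [pow_add, pow_mul]; exact congrArg Subtype.val hn⟩

theorem finite_omega [CommGroup G] (hp : p ≠ 0) (hG : IsDiscretePToral p G) (n : ℕ) :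
    (Omega p n G : Set G).Finite := by
  obtain ⟨T, -, hT, k, hk⟩ := hG
  have : T.FiniteIndex := ⟨by rw [Subgroup.index, hk]; exact pow_ne_zero k hp⟩
  have : Finite {t : T | t ^ p ^ n = 1} :=
    (hT.finite_setOf_pow_eq_one (pow_ne_zero n hp)).to_subtype
  have : Finite (T.subgroupOf (Omega p n G)) :=
    Finite.of_injective (fun x => (⟨⟨x.1.1, x.2⟩, Subtype.ext x.1.2⟩ : {t : T | t ^ p ^ n = 1}))
      fun x y hxy => by simpa using congrArg (fun z => (z.1.1 : G)) hxy
  have := (Subgroup.finite_iff_finite_and_finiteIndex (T.subgroupOf (Omega p n G))).2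
    ⟨this, inferInstance⟩
  exact Set.toFinite _

end IsDiscretePToral

theorem Subgroup.index_centralizer_singleton {G : Type*} [Group G] (g : G) :
    (centralizer {g}).index = {x | IsConj g x}.ncard := by
  have hcomap : (centralizer {g}).index = (MulAction.stabilizer (ConjAct G) g).index := by
    rw [Subgroup.centralizer_eq_comap_stabilizer]
    exact Subgroup.index_comap_of_surjective _ ConjAct.toConjAct.surjective
  rw [hcomap, MulAction.index_stabilizer]
  congr 1
  ext x
  exact ConjAct.mem_orbit_conjAct.trans isConj_comm

theorem identityComponent_le_centralizer_general (p : ℕ) (hp : p.Prime) {Γ : Type*} [Group Γ]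
    (D : Subgroup Γ) (hN : D.Normal)
    (hab : ∀ x ∈ D, ∀ y ∈ D, x * y = y * x) (hD : IsDiscretePToral p ↥D) :
    identityComponent p Γ ≤ Subgroup.centralizer (D : Set Γ) := by
  let _ : CommGroup D := { D.toGroup with mul_comm := fun a b => Subtype.ext (hab a a.2 b b.2) }
  refine iSup₂_le fun T hT t ht => Subgroup.mem_centralizer_iff.2 fun d hd => ?_
  obtain ⟨n, hn⟩ := hD.exists_pow_prime_pow_eq_one hp.ne_zero ⟨d, hd⟩
  have hconj : {x | IsConj d x} ⊆ D.subtype '' (Omega p n D : Set D) := by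
    intro x hx
    obtain ⟨c, rfl⟩ := isConj_iff.1 hx
    refine ⟨⟨_, hN.conj_mem d hd c⟩, Subtype.ext ?_, rfl⟩
    simpa [conj_pow] using congrArg Subtype.val hn
  have : (Subgroup.centralizer {d}).FiniteIndex := by
    rw [Subgroup.finiteIndex_iff, Subgroup.index_centralizer_singleton]
    exact Set.ncard_ne_zero_of_mem (IsConj.refl d)
      (((hD.finite_omega hp.ne_zero n).image D.subtype).subset hconj)
  exact (Subgroup.mem_centralizer_singleton_iff.1 (hT.le_of_finiteIndex hp _ ht)).symm

/-- If `D` is a normal abelian discrete `p`-toral subgroup of a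
virtually discrete `p`-toral group `Γ`, then the identity component `Γ₀`
centralizes `D`. -/
theorem identityComponent_le_centralizer (p : ℕ) (hp : p.Prime) {Γ : Type*} [Group Γ]
    (hΓ : IsVirtuallyDiscretePToral p Γ) (D : Subgroup Γ) (hN : D.Normal)
    (hab : ∀ x ∈ D, ∀ y ∈ D, x * y = y * x) (hD : IsDiscretePToral p ↥D) :
    identityComponent p Γ ≤ Subgroup.centralizer (D : Set Γ) :=
  identityComponent_le_centralizer_general p hp D hN hab hD
end

section
/- Let p be an odd prime and let A be a finite p-group acting quadratically on an elementary abelian p-group V (i.e., [V,A,A] = 1). Then for every proper subgroup A₀ < A, the norm map N_{A₀}^A : C_V(A₀) → C_V(A) is identically 1. -/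
/-!
Quadratic action makes `a ↦ v⁻¹ * a • v` a homomorphism `φ : A → V` vanishing on `A₀`, so the
norm of `v` is `v ^ |A : A₀| * ∏ r, φ r`. The first factor is trivial because `p` divides the
index. The second is a power of `∏ c, φ c` over `c ∈ A ⧸ ker φ`, which equals its own inverse
(pair `c` with `c⁻¹`) and is therefore trivial because `p` is odd.
-/

open scoped Pointwise

section QuadraticAction

variable {A V : Type*} [Group A] [Group V] [MulDistribMulAction A V]

theorem smul_inv_mul_smul_of_quadratic
    (hquad : actComm A Set.univ (actComm A Set.univ (⊤ : Subgroup V)) = ⊥) (a b : A) (v : V) :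
    a • (v⁻¹ * b • v) = v⁻¹ * b • v := by
  have hcomm : v⁻¹ * b • v ∈ actComm A Set.univ (⊤ : Subgroup V) :=
    Subgroup.subset_closure ⟨v, Subgroup.mem_top v, b, Set.mem_univ b, rfl⟩
  have hcomm₂ : (v⁻¹ * b • v)⁻¹ * a • (v⁻¹ * b • v) ∈
      actComm A Set.univ (actComm A Set.univ (⊤ : Subgroup V)) :=
    Subgroup.subset_closure ⟨_, hcomm, a, Set.mem_univ a, rfl⟩
  rw [hquad, Subgroup.mem_bot] at hcomm₂
  exact (inv_mul_eq_one.mp hcomm₂).symm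

def quadraticCommHom (hquad : actComm A Set.univ (actComm A Set.univ (⊤ : Subgroup V)) = ⊥)
    (v : V) : A →* V where
  toFun a := v⁻¹ * a • v
  map_one' := by rw [one_smul, inv_mul_cancel]
  map_mul' a b := by
    conv_lhs => rw [mul_smul, ← mul_inv_cancel_left v (b • v), smul_mul',
      smul_inv_mul_smul_of_quadratic hquad a b v]
    simp only [mul_assoc]

variable {hquad : actComm A Set.univ (actComm A Set.univ (⊤ : Subgroup V)) = ⊥}

@[simp]
theorem quadraticCommHom_apply (v : V) (a : A) : quadraticCommHom hquad v a = v⁻¹ * a • v :=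
  rfl

theorem le_ker_quadraticCommHom {A₀ : Subgroup A} {v : V} (hv : ∀ a ∈ A₀, a • v = v) :
    A₀ ≤ (quadraticCommHom hquad v).ker := fun a ha => by
  rw [MonoidHom.mem_ker, quadraticCommHom_apply, hv a ha, inv_mul_cancel]

end QuadraticAction

namespace IsRelTransversal

variable {G : Type*} [Group G] {H : Subgroup G} {R : Finset G}

theorem bijOn_mk (hR : IsRelTransversal H ⊤ R) :
    Set.BijOn (QuotientGroup.mk : G → G ⧸ H) R Set.univ := by
  refine ⟨Set.mapsTo_univ _ _, fun r₁ hr₁ r₂ hr₂ hr => ?_, fun q _ => ?_⟩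
  · obtain ⟨r, -, hr_unique⟩ := hR.2 r₂ (Subgroup.mem_top r₂)
    rw [hr_unique r₁ ⟨hr₁, QuotientGroup.eq.mp hr⟩,
      hr_unique r₂ ⟨hr₂, by rw [inv_mul_cancel]; exact H.one_mem⟩]
  · induction q using QuotientGroup.induction_on with
    | H g =>
      obtain ⟨r, ⟨hr, hrg⟩, -⟩ := hR.2 g (Subgroup.mem_top g)
      exact ⟨r, hr, QuotientGroup.eq.mpr hrg⟩

theorem card_eq_index (hR : IsRelTransversal H ⊤ R) : R.card = H.index := by
  rw [Subgroup.index, ← Nat.card_univ, ← Nat.card_congr hR.bijOn_mk.equiv,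
    SetLike.coe_sort_coe, Nat.card_eq_fintype_card, Fintype.card_coe]

theorem prod_mk_eq_pow (hR : IsRelTransversal H ⊤ R) {K : Subgroup G} (hHK : H ≤ K)
    [Fintype (G ⧸ K)] {M : Type*} [CommMonoid M] (f : G ⧸ K → M) :
    ∏ r ∈ R, f r = (∏ c, f c) ^ H.relIndex K := by
  have : Finite (G ⧸ H) := Set.finite_univ_iff.mp (hR.bijOn_mk.image_eq ▸ R.finite_toSet.image _)
  have := Fintype.ofFinite (G ⧸ H)
  let e := Subgroup.quotientEquivProdOfLE hHK
  have := Finite.of_equiv _ e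
  have := Finite.prod_right (G ⧸ K) (β := K ⧸ H.subgroupOf K)
  have := Fintype.ofFinite (K ⧸ H.subgroupOf K)
  calc ∏ r ∈ R, f r = ∏ q : G ⧸ H, f (e q).1 := by
        refine Finset.prod_nbij QuotientGroup.mk (fun _ _ => Finset.mem_univ _)
          hR.bijOn_mk.injOn ?_ fun _ _ => rfl
        simpa only [Finset.coe_univ] using hR.bijOn_mk.surjOn
    _ = ∏ x : (G ⧸ K) × (K ⧸ H.subgroupOf K), f x.1 := Fintype.prod_equiv e _ _ fun _ => rfl
    _ = (∏ c, f c) ^ H.relIndex K := by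
        simp only [Fintype.prod_prod_type, Finset.prod_const, Finset.card_univ,
          Finset.prod_pow, Subgroup.relIndex, Subgroup.index, Nat.card_eq_fintype_card]

end IsRelTransversal

theorem IsPGroup.prime_dvd_index_of_ne_top {p : ℕ} (hp : p.Prime) {G : Type*} [Group G]
    (hG : IsPGroup p G) {H : Subgroup G} [H.FiniteIndex] (hH : H ≠ ⊤) : p ∣ H.index := by
  have := Fact.mk hp
  obtain ⟨n, hn⟩ := hG.index H
  rcases n with _ | n
  · exact absurd (Subgroup.index_eq_one.mp hn) hH
  · exact hn ▸ dvd_pow_self p n.succ_ne_zero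

theorem MonoidHom.prod_univ_eq_one_of_odd {Q M : Type*} [Group Q] [Fintype Q] [CommGroup M]
    (χ : Q →* M) {n : ℕ} (hn : Odd n) (hM : ∀ m : M, m ^ n = 1) : ∏ q, χ q = 1 := by
  have hinv : (∏ q, χ q)⁻¹ = ∏ q, χ q := by
    rw [← Finset.prod_inv_distrib]
    exact Fintype.prod_equiv (Equiv.inv Q) _ _ fun q => (map_inv χ q).symm
  have hsq : (∏ q, χ q) ^ 2 = 1 := by
    rw [sq]
    nth_rw 1 [← hinv]
    exact inv_mul_cancel _
  obtain ⟨k, rfl⟩ := hn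
  simpa only [pow_succ, pow_mul, hsq, one_pow, one_mul] using hM (∏ q, χ q)

/-- Let `p` be odd and `A` a finite `p`-group acting quadratically on
an elementary abelian `p`-group `V`.  Then for every proper subgroup `A₀ < A` the norm
map `N_{A₀}^A` is identically `1` on `C_V(A₀)`. -/
theorem norm_eq_one_of_quadratic_odd (p : ℕ) (hp : p.Prime) (hodd : Odd p)
    {A V : Type*} [Group A] [Finite A] [CommGroup V] [MulDistribMulAction A V]
    (hA : IsPGroup p A) (helem : ∀ v : V, v ^ p = 1)
    (hquad : actComm A Set.univ (actComm A Set.univ (⊤ : Subgroup V)) = ⊥)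
    (A₀ : Subgroup A) (hA₀ : A₀ ≠ ⊤)
    (R : Finset A) (hR : IsRelTransversal A₀ ⊤ R)
    (v : V) (hv : ∀ a ∈ A₀, a • v = v) :
    ∏ r ∈ R, r • v = 1 := by
  classical
  have := Fintype.ofFinite A
  let φ := quadraticCommHom hquad v
  obtain ⟨t, ht⟩ := hA.prime_dvd_index_of_ne_top hp hA₀
  calc ∏ r ∈ R, r • v = ∏ r ∈ R, v * QuotientGroup.kerLift φ r := by
        simp only [QuotientGroup.kerLift_mk, φ, quadraticCommHom_apply, mul_inv_cancel_left]
    _ = v ^ A₀.index * (∏ c, QuotientGroup.kerLift φ c) ^ A₀.relIndex φ.ker := by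
        rw [Finset.prod_mul_distrib, Finset.prod_const, hR.card_eq_index,
          hR.prod_mk_eq_pow (le_ker_quadraticCommHom hv)]
    _ = 1 := by
        rw [(QuotientGroup.kerLift φ).prod_univ_eq_one_of_odd hodd helem, ht, pow_mul, helem,
          one_pow, one_pow, one_mul]
end

section
/- Let G be a finite group acting faithfully on an abelian discrete p-toral group D. Every nontrivial offender A of G on D contains a nontrivial best offender: namely, any nontrivial subgroup B ≤ A maximizing |B| · |C_D(B)/D₀| is a best offender on D. -/
open scoped Pointwise

/-!
Every nontrivial `B' ≤ B` is handled by the maximality of `B`. The trivial subgroup has value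
`|D/D₀|`, and the offender inequality `|D/C_D(A)| ≤ |A|` gives
`|D/D₀| = |C_D(A)/D₀| · |D/C_D(A)| ≤ |A| · |C_D(A)/D₀|`, which maximality bounds by the value of `B`.
-/

section fixedSub

variable {G D : Type*} [Group G] [Group D] [MulDistribMulAction G D]

theorem fixedSub_antitone {S T : Set G} (hST : S ⊆ T) :
    fixedSub G D T ≤ fixedSub G D S :=
  fun _ hx a ha => hx a (hST ha)

@[simp]
theorem fixedSub_bot : fixedSub G D ((⊥ : Subgroup G) : Set G) = ⊤ := by
  refine eq_top_iff.mpr fun x _ a ha => ?_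
  rw [SetLike.mem_coe, Subgroup.mem_bot] at ha
  rw [ha, one_smul]

end fixedSub

section Offender

variable {p : ℕ} {G D : Type*} [Group G] [CommGroup D] [MulDistribMulAction G D]
  {D₀ : Subgroup D}

theorem card_bot_mul_relIndex_fixedSub_bot :
    Nat.card (⊥ : Subgroup G) * D₀.relIndex (fixedSub G D ((⊥ : Subgroup G) : Set G)) =
      D₀.index := by
  rw [fixedSub_bot, Subgroup.relIndex_top_right, Subgroup.card_bot, one_mul]

theorem IsOffender.index_le_card_mul_relIndex {A : Subgroup G} (hA : IsOffender p D₀ A) :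
    D₀.index ≤ Nat.card A * D₀.relIndex (fixedSub G D (A : Set G)) := by
  obtain ⟨-, -, hD₀A, -, hindex⟩ := hA
  calc D₀.index
      = D₀.relIndex (fixedSub G D (A : Set G)) * (fixedSub G D (A : Set G)).index :=
        (Subgroup.relIndex_mul_index hD₀A).symm
    _ ≤ D₀.relIndex (fixedSub G D (A : Set G)) * Nat.card A := Nat.mul_le_mul_left _ hindex
    _ = Nat.card A * D₀.relIndex (fixedSub G D (A : Set G)) := mul_comm _ _

theorem IsOffender.isBestOffender_of_le {A B : Subgroup G} (hA : IsOffender p D₀ A)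
    (hBA : B ≤ A)
    (hB : ∀ B' : Subgroup G, B' ≤ B →
      Nat.card B' * D₀.relIndex (fixedSub G D (B' : Set G)) ≤
        Nat.card B * D₀.relIndex (fixedSub G D (B : Set G))) :
    IsBestOffender p D₀ B :=
  ⟨hA.1.to_le hBA, fun x hx y hy => hA.2.1 x (hBA hx) y (hBA hy),
    hA.2.2.1.trans (fixedSub_antitone hBA), hB⟩

end Offender

theorem offender_contains_best_offender_general (p : ℕ) {G D : Type*} [Group G]
    [CommGroup D] [MulDistribMulAction G D]
    (D₀ : Subgroup D)
    (A : Subgroup G) (hA : IsOffender p D₀ A) (hAnt : A ≠ ⊥)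
    (B : Subgroup G) (hBA : B ≤ A)
    (hmax : ∀ B' : Subgroup G, B' ≤ A → B' ≠ ⊥ →
      Nat.card B' * D₀.relIndex (fixedSub G D (B' : Set G)) ≤
        Nat.card B * D₀.relIndex (fixedSub G D (B : Set G))) :
    IsBestOffender p D₀ B := by
  refine hA.isBestOffender_of_le hBA fun B' hB'B => ?_
  rcases eq_or_ne B' ⊥ with rfl | hB'nt
  · rw [card_bot_mul_relIndex_fixedSub_bot]
    exact hA.index_le_card_mul_relIndex.trans (hmax A le_rfl hAnt)
  · exact hmax B' (hB'B.trans hBA) hB'nt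

/-- Every nontrivial offender contains a nontrivial best offender:
any nontrivial subgroup `B ≤ A` maximizing `|B| · |C_D(B)/D₀|` among nontrivial
subgroups of the nontrivial offender `A` is a best offender on `D`. -/
theorem offender_contains_best_offender (p : ℕ) (hp : p.Prime) {G D : Type*} [Group G]
    [Finite G] [CommGroup D] [MulDistribMulAction G D] [FaithfulSMul G D]
    (hD : IsDiscretePToral p D) (D₀ : Subgroup D) (hD₀ : IsMaxDivisible D₀)
    (A : Subgroup G) (hA : IsOffender p D₀ A) (hAnt : A ≠ ⊥)
    (B : Subgroup G) (hBA : B ≤ A) (hBnt : B ≠ ⊥)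
    (hmax : ∀ B' : Subgroup G, B' ≤ A → B' ≠ ⊥ →
      Nat.card B' * D₀.relIndex (fixedSub G D (B' : Set G)) ≤
        Nat.card B * D₀.relIndex (fixedSub G D (B : Set G))) :
    IsBestOffender p D₀ B :=
  offender_contains_best_offender_general p D₀ A hA hAnt B hBA hmax
end

section
/- Let Γ be a virtually discrete p-toral group with Sylow p-subgroup S, D a normal abelian subgroup of Γ, and Q ≤ S a subgroup containing C_S(D). Then the image of N_Γ(Q) in G = Γ/C_Γ(D) equals N_G(Q̄), where Q̄ is the image of Q in G. -/
open scoped Pointwise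

/-!
The inclusion `⊆` is formal. For the converse, let `g` map into `N_G(Q̄)`; then `g` normalizes
`K = Q·C`, where `C = C_Γ(D)`. Every normal discrete `p`-torus `T` of finite index lies in `S`,
and `S` maps onto a Sylow subgroup of the finite group `Γ/T`; since `S ∩ C ≤ Q`, the image of `Q`
then has index prime to `p` in the image of `K`, so the Frattini argument there gives `c ∈ C`
with `cg` normalizing `Q·T`. As `cg` also normalizes `K`, it normalizes `Q·T ∩ K`, which is `Q`
because `S ∩ K = Q·(S ∩ C) = Q`.
-/

open Subgroup QuotientGroup

namespace Subgroup

variable {G G' : Type*} [Group G] [Group G'] {p : ℕ}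

lemma map_inf_of_ker_le {f : G →* G'} {A : Subgroup G} (B : Subgroup G) (h : f.ker ≤ A) :
    (A ⊓ B).map f = A.map f ⊓ B.map f := by
  refine le_antisymm (map_inf_le A B f) ?_
  rintro _ ⟨hA, b, hb, rfl⟩
  refine ⟨b, ⟨?_, hb⟩, rfl⟩
  rw [← comap_map_eq_self h]
  exact hA

lemma comap_normalizer_map_of_surjective {f : G →* G'} (hf : Function.Surjective f)
    (H : Subgroup G) :
    (normalizer (H.map f : Set G')).comap f =
      normalizer ((H ⊔ f.ker : Subgroup G) : Set G) := by
  rw [comap_normalizer_eq_of_surjective _ hf, comap_map_eq]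

lemma inf_sup_le_of_inf_le {S Q N : Subgroup G} [N.Normal] (hQS : Q ≤ S) (hSN : S ⊓ N ≤ Q) :
    S ⊓ (Q ⊔ N) ≤ Q := by
  intro x hx
  obtain ⟨hxS, hx⟩ := mem_inf.mp hx
  rw [← SetLike.mem_coe, mul_normal] at hx
  obtain ⟨q, hq, n, hn, rfl⟩ := hx
  exact mul_mem hq (hSN ⟨(mul_mem_cancel_left (hQS hq)).mp hxS, hn⟩)

lemma relIndex_sup_eq_relIndex_inf (H N : Subgroup G) [N.Normal] [N.FiniteIndex] :
    H.relIndex (H ⊔ N) = (H ⊓ N).relIndex N := by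
  have hH : (H ⊓ N).relIndex H = N.relIndex (H ⊔ N) := by
    rw [inf_relIndex_left, relIndex_sup_right]
  have hN : N.relIndex (H ⊔ N) ≠ 0 :=
    (isFiniteRelIndex_of_finiteIndex (H := N) (K := H ⊔ N)).relIndex_ne_zero
  refine Nat.eq_of_mul_eq_mul_left (Nat.pos_of_ne_zero hN) ?_
  rw [← hH, relIndex_mul_relIndex _ _ _ inf_le_left le_sup_left, hH, mul_comm,
    relIndex_mul_relIndex _ _ _ inf_le_right le_sup_right]

lemma not_dvd_relIndex_sup_of_inf_le {S Q N : Subgroup G} [N.Normal] [N.FiniteIndex]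
    (hS : ¬ p ∣ S.index) (hQS : Q ≤ S) (hSN : S ⊓ N ≤ Q) : ¬ p ∣ Q.relIndex (Q ⊔ N) := by
  have hQN : Q ⊓ N = S ⊓ N :=
    le_antisymm (inf_le_inf_right N hQS) (le_inf hSN inf_le_right)
  rw [relIndex_sup_eq_relIndex_inf, hQN, ← relIndex_sup_eq_relIndex_inf]
  exact fun h => hS (h.trans (relIndex_dvd_index_of_le le_sup_left))

/-- The Frattini argument, for a `p`-subgroup that is Sylow in `K` by the index condition. -/
theorem exists_mul_mem_normalizer_of_not_dvd_relIndex [Finite G] [Fact p.Prime]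
    {P K : Subgroup G} (hPK : P ≤ K) (hP : IsPGroup p P) (hidx : ¬ p ∣ P.relIndex K) {g : G}
    (hg : g ∈ normalizer (K : Set G)) : ∃ k ∈ K, k * g ∈ normalizer (P : Set G) := by
  have hgK : MulAut.conj g • K = K := conjAct_pointwise_smul_eq_self hg
  set P' := MulAut.conj g • P
  have hP'K : P' ≤ K := hgK ▸ pointwise_smul_le_pointwise_smul_iff.mpr hPK
  have hidx' : ¬ p ∣ P'.relIndex K := by rwa [← hgK, relIndex_pointwise_smul]
  let S : Sylow p K := hP.comap_subtype.toSylow (P := P.subgroupOf K) hidx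
  let S' : Sylow p K := (hP.map _).comap_subtype.toSylow (P := P'.subgroupOf K) hidx'
  obtain ⟨k, hk⟩ := MulAction.exists_smul_eq K S' S
  refine ⟨k, k.2, ?_⟩
  replace hk : MulAut.conj k • P'.subgroupOf K = P.subgroupOf K := congrArg Sylow.toSubgroup hk
  rw [conj_smul_subgroupOf hP'K, subgroupOf_inj, inf_of_le_left (conj_smul_le_of_le hP'K k),
    inf_of_le_left hPK, ← mul_smul, ← map_mul] at hk
  exact conjAct_pointwise_smul_iff.mp hk

theorem exists_mul_mem_normalizer_of_sup_normal [Finite G] [Fact p.Prime] {P N : Subgroup G}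
    [N.Normal] (hP : IsPGroup p P) (hidx : ¬ p ∣ P.relIndex (P ⊔ N)) {g : G}
    (hg : g ∈ normalizer ((P ⊔ N : Subgroup G) : Set G)) :
    ∃ n ∈ N, n * g ∈ normalizer (P : Set G) := by
  obtain ⟨k, hk, hkg⟩ := exists_mul_mem_normalizer_of_not_dvd_relIndex le_sup_left hP hidx hg
  rw [← SetLike.mem_coe, mul_normal] at hk
  obtain ⟨x, hx, n, hn, rfl⟩ := hk
  refine ⟨n, hn, ?_⟩
  simpa [mul_assoc] using mul_mem (inv_mem (le_normalizer hx)) hkg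

end Subgroup

variable {p : ℕ}

lemma Prufer.exists_pow_smul_eq_zero {ι : Type*} [Fintype ι] (x : ι → Prufer p) :
    ∃ n : ℕ, p ^ n • x = 0 := by
  choose n hn using fun i => (x i).2
  refine ⟨∑ i, n i, funext fun i => Subtype.ext ?_⟩
  have hle : n i ≤ ∑ j, n j :=
    Finset.single_le_sum (fun j _ => Nat.zero_le (n j)) (Finset.mem_univ i)
  simp only [Pi.smul_apply, AddSubgroup.coe_nsmul, Pi.zero_apply, AddSubgroup.coe_zero]
  rw [← Nat.sub_add_cancel hle, pow_add, mul_smul, hn i, smul_zero]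

lemma IsPTorus.isPGroup_s14 {T : Type*} [Group T] (hT : IsPTorus p T) : IsPGroup p T := by
  obtain ⟨r, ⟨e⟩⟩ := hT
  refine IsPGroup.of_equiv (fun x => ?_) e.symm
  obtain ⟨n, hn⟩ := Prufer.exists_pow_smul_eq_zero x.toAdd
  exact ⟨n, Multiplicative.toAdd.injective (by rw [toAdd_pow, hn, toAdd_one])⟩

lemma IsDiscretePToral.isPGroup_s14 {G : Type*} [Group G] (hG : IsDiscretePToral p G) :
    IsPGroup p G := by
  obtain ⟨T, hTn, hT, k, hk⟩ := hG
  have hker : IsPGroup p (mk' T).ker := by rw [ker_mk']; exact hT.isPGroup_s14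
  have := ((IsPGroup.of_card hk).to_subgroup ⊤).comap_of_ker_isPGroup (mk' T) hker
  rw [comap_top] at this
  exact this.of_equiv topEquiv

section TorusQuotient

variable {Γ : Type*} [Group Γ] {T : Subgroup Γ} [T.Normal] [Finite (Γ ⧸ T)] [Fact p.Prime]

lemma isDiscretePToral_of_le_of_isPGroup_map (hT : IsPTorus p T) {P : Subgroup Γ}
    (hTP : T ≤ P) (hP : IsPGroup p (P.map (mk' T))) : IsDiscretePToral p P := by
  obtain ⟨r, ⟨e⟩⟩ := hT
  refine ⟨T.subgroupOf P, inferInstance, ⟨r, ⟨(subgroupOfEquivOfLe hTP).trans e⟩⟩, ?_⟩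
  set f := (mk' T).comp P.subtype
  have hker : f.ker = T.subgroupOf P := by
    ext x
    simp [f, Subgroup.mem_subgroupOf]
  have hrange : f.range = P.map (mk' T) := by
    rw [MonoidHom.range_comp, range_subtype]
  obtain ⟨k, hk⟩ := IsPGroup.iff_card.mp hP
  refine ⟨k, ?_⟩
  rw [← hker, Nat.card_congr (quotientKerEquivRange f).toEquiv, hrange, hk]

variable {S : Subgroup Γ}

lemma IsMaxDiscretePToralSubgroup.torus_le (hT : IsPTorus p T)
    (hS : IsMaxDiscretePToralSubgroup p S) : T ≤ S := by
  have hST : IsPGroup p ((S ⊔ T).map (mk' T)) := by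
    rw [Subgroup.map_sup, map_mk'_self, sup_bot_eq]
    exact hS.1.isPGroup_s14.map _
  rw [← hS.2 _ (isDiscretePToral_of_le_of_isPGroup_map hT le_sup_right hST) le_sup_left]
  exact le_sup_right

lemma IsMaxDiscretePToralSubgroup.not_dvd_index_map (hT : IsPTorus p T)
    (hS : IsMaxDiscretePToralSubgroup p S) : ¬ p ∣ (S.map (mk' T)).index := by
  obtain ⟨P, hSP⟩ := (hS.1.isPGroup_s14.map (mk' T)).exists_le_sylow
  have hTP : T ≤ P.comap (mk' T) := (ker_mk' T).symm.trans_le (ker_le_comap _ _)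
  have hPS : P.comap (mk' T) = S :=
    hS.2 _ (isDiscretePToral_of_le_of_isPGroup_map hT hTP
      (by rw [map_comap_eq_self_of_surjective (mk'_surjective T)]; exact P.2))
      (map_le_iff_le_comap.mp hSP)
  rw [← hPS, map_comap_eq_self_of_surjective (mk'_surjective T)]
  exact P.not_dvd_index

end TorusQuotient

theorem IsMaxDiscretePToralSubgroup.exists_mul_mem_normalizer [Fact p.Prime] {Γ : Type*}
    [Group Γ] (hΓ : IsVirtuallyDiscretePToral p Γ) {S Q C : Subgroup Γ}
    (hS : IsMaxDiscretePToralSubgroup p S) [C.Normal] (hQS : Q ≤ S) (hSC : S ⊓ C ≤ Q) {g : Γ}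
    (hg : g ∈ normalizer ((Q ⊔ C : Subgroup Γ) : Set Γ)) :
    ∃ c ∈ C, c * g ∈ normalizer (Q : Set Γ) := by
  obtain ⟨T, hTn, hT, hTf⟩ := hΓ
  have hTS : T ≤ S := hS.torus_le hT
  set π := mk' T
  have hQ : IsPGroup p (Q.map π) := (hS.1.isPGroup_s14.map π).to_le (map_mono hQS)
  have hidx : ¬ p ∣ (Q.map π).relIndex (Q.map π ⊔ C.map π) := by
    refine not_dvd_relIndex_sup_of_inf_le (hS.not_dvd_index_map hT) (map_mono hQS) ?_
    rw [← map_inf_of_ker_le _ ((ker_mk' T).trans_le hTS)]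
    exact map_mono hSC
  have hgπ : π g ∈ normalizer ((Q.map π ⊔ C.map π : Subgroup _) : Set (Γ ⧸ T)) := by
    rw [← Subgroup.map_sup]
    exact le_normalizer_map π ⟨g, hg, rfl⟩
  have : (C.map π).Normal := Normal.map inferInstance π (mk'_surjective T)
  obtain ⟨_, ⟨c, hc, rfl⟩, hcg⟩ := exists_mul_mem_normalizer_of_sup_normal hQ hidx hgπ
  refine ⟨c, hc, ?_⟩
  have hQT : c * g ∈ normalizer ((Q ⊔ T : Subgroup Γ) : Set Γ) := by
    rw [← ker_mk' T, ← comap_normalizer_map_of_surjective (mk'_surjective T), mem_comap,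
      map_mul]
    exact hcg
  have hQC : c * g ∈ normalizer ((Q ⊔ C : Subgroup Γ) : Set Γ) :=
    mul_mem (le_normalizer (mem_sup_right hc)) hg
  have hQTC : (Q ⊔ T) ⊓ (Q ⊔ C) = Q :=
    le_antisymm ((inf_le_inf_right _ (sup_le hQS hTS)).trans (inf_sup_le_of_inf_le hQS hSC))
      (le_inf le_sup_left le_sup_left)
  simpa [hQTC] using inf_normalizer_le_normalizer_inf ⟨hQT, hQC⟩

theorem image_normalizer_eq_normalizer_image_general (p : ℕ) (hp : p.Prime) {Γ : Type*} [Group Γ]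
    (hΓ : IsVirtuallyDiscretePToral p Γ)
    (S : Subgroup Γ) (hS : IsMaxDiscretePToralSubgroup p S)
    (D : Subgroup Γ)
    [hc : (Subgroup.centralizer (D : Set Γ)).Normal]
    (Q : Subgroup Γ) (hQS : Q ≤ S)
    (hCS : S ⊓ Subgroup.centralizer (D : Set Γ) ≤ Q) :
    (Subgroup.normalizer (Q : Set Γ)).map (QuotientGroup.mk' (Subgroup.centralizer (D : Set Γ))) =
      Subgroup.normalizer ((Q.map (QuotientGroup.mk' (Subgroup.centralizer (D : Set Γ))) : Subgroup _) : Set _) := by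
  have : Fact p.Prime := ⟨hp⟩
  set C := centralizer (D : Set Γ)
  refine le_antisymm (le_normalizer_map _) fun x hx => ?_
  obtain ⟨g, rfl⟩ := mk'_surjective C x
  have hg : g ∈ normalizer ((Q ⊔ C : Subgroup Γ) : Set Γ) := by
    rw [← ker_mk' C, ← comap_normalizer_map_of_surjective (mk'_surjective C)]
    exact hx
  obtain ⟨c, hc, hcg⟩ := hS.exists_mul_mem_normalizer hΓ hQS hCS hg
  refine ⟨c * g, hcg, ?_⟩
  rw [map_mul, MonoidHom.mem_ker.mp ((ker_mk' C).ge hc), one_mul]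

/-- Let `Γ` be virtually discrete `p`-toral with Sylow `p`-subgroup
`S`, `D ⊴ Γ` abelian (discrete `p`-toral), and `Q ≤ S` containing `C_S(D)`.  Then the
image of `N_Γ(Q)` in `G = Γ/C_Γ(D)` is `N_G(Q̄)`. -/
theorem image_normalizer_eq_normalizer_image (p : ℕ) (hp : p.Prime) {Γ : Type*} [Group Γ]
    (hΓ : IsVirtuallyDiscretePToral p Γ)
    (S : Subgroup Γ) (hS : IsMaxDiscretePToralSubgroup p S)
    (D : Subgroup Γ) (hN : D.Normal)
    (hab : ∀ x ∈ D, ∀ y ∈ D, x * y = y * x) (hD : IsDiscretePToral p ↥D)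
    [hc : (Subgroup.centralizer (D : Set Γ)).Normal]
    (Q : Subgroup Γ) (hQS : Q ≤ S)
    (hCS : S ⊓ Subgroup.centralizer (D : Set Γ) ≤ Q) :
    (Subgroup.normalizer (Q : Set Γ)).map (QuotientGroup.mk' (Subgroup.centralizer (D : Set Γ))) =
      Subgroup.normalizer ((Q.map (QuotientGroup.mk' (Subgroup.centralizer (D : Set Γ))) : Subgroup _) : Set _) :=
  image_normalizer_eq_normalizer_image_general p hp hΓ S hS D (hc := hc) Q hQS hCS
end
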